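/- arXiv:2304.06808 — 2 statements merged into one kernel-verified Lean document; each statement's English description precedes it below -/
import Mathlib

section
/- Let σ > 0, B > 0, δ ∈ (0,1), and T ≥ 1. Suppose (ℓ_t)_{t=1}^T ∈ {0,1}^T are labeling indicators, M_1 ≤ M_2 ≤ ... ≤ M_T are arbitrary nondecreasing positive integer counts (arrivals up to time t of a given type), and N_t = Σ_{s≤t} ℓ_s (labels up to time t). Assume that for every round t with ℓ_t = 1 the threshold condition sqrt(2σ² log(2 n_t³/δ) / N_{t−1}) > B^{1/3} M_t^{−1/3} holds, where n_t ≤ T is the total number of labels at time t (so n_t³ ≤ T³), and the left side is interpreted as +∞ when N_{t−1}=0. Then the total number of labels satisfies N_T ≤ 2σ² log(2T³/δ) · B^{−2/3} · M_T^{2/3} + 1. -/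
open Finset

/-- Deterministic counting argument bounding the number of labels of one type under
Algorithm 1's threshold rule: if labeling at a round `t ∈ {1,…,T}` requires
`sqrt(2σ² log(2 nₜ³/δ)/N_{t−1}) > B^{1/3} Mₜ^{−1/3}` (interpreted as `+∞` when
`N_{t−1} = 0`), where `1 ≤ nₜ ≤ T` is the total number of labels at time `t` and the
arrival counts `Mₜ` are positive and nondecreasing, then
`N_T ≤ 2σ² log(2T³/δ)·B^{−2/3}·M_T^{2/3} + 1`. -/
theorem label_count_bound (σ B δ : ℝ) (hσ : 0 < σ) (hB : 0 < B)
    (hδ : δ ∈ Set.Ioo (0 : ℝ) 1) (T : ℕ) (hT : 1 ≤ T)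
    (ℓ : ℕ → Bool) (M : ℕ → ℕ) (n : ℕ → ℕ)
    (hMpos : ∀ t, 1 ≤ t → t ≤ T → 1 ≤ M t)
    (hMmono : ∀ s t, 1 ≤ s → s ≤ t → t ≤ T → M s ≤ M t)
    (N : ℕ → ℕ) (hN : ∀ t, N t = ((Icc 1 t).filter fun s => ℓ s = true).card)
    (hn : ∀ t, 1 ≤ t → t ≤ T → ℓ t = true → 1 ≤ n t ∧ n t ≤ T)
    (hthresh : ∀ t, 1 ≤ t → t ≤ T → ℓ t = true →
      (N (t - 1) = 0 ∨
        B ^ ((1 : ℝ) / 3) * (M t : ℝ) ^ (-(1 : ℝ) / 3) <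
          Real.sqrt (2 * σ ^ 2 * Real.log (2 * (n t : ℝ) ^ 3 / δ) / (N (t - 1) : ℝ)))) :
    (N T : ℝ) ≤
      2 * σ ^ 2 * Real.log (2 * (T : ℝ) ^ 3 / δ) * B ^ (-(2 : ℝ) / 3) *
          (M T : ℝ) ^ ((2 : ℝ) / 3) + 1 := by
  have hδ0 := hδ.1
  have hδ1 := hδ.2
  have hT1 : (1:ℝ) ≤ (T:ℝ) := by exact_mod_cast hT
  have hlogT : 0 < Real.log (2 * (T : ℝ) ^ 3 / δ) := by
    apply Real.log_pos
    have h3 : (1:ℝ) ≤ (T:ℝ)^3 := one_le_pow₀ hT1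
    have h1 : (1:ℝ) < 2 * (T:ℝ)^3 := by nlinarith
    have h2 : 2 * (T:ℝ)^3 ≤ 2 * (T:ℝ)^3 / δ := by
      rw [le_div_iff₀ hδ0]; nlinarith
    linarith
  have hCnn : 0 ≤ 2 * σ ^ 2 * Real.log (2 * (T : ℝ) ^ 3 / δ) * B ^ (-(2 : ℝ) / 3) *
      (M T : ℝ) ^ ((2 : ℝ) / 3) := by
    have h1 : (0:ℝ) ≤ B ^ (-(2 : ℝ) / 3) := Real.rpow_nonneg hB.le _
    have h2 : (0:ℝ) ≤ ((M T : ℝ)) ^ ((2 : ℝ) / 3) := Real.rpow_nonneg (Nat.cast_nonneg _) _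
    have : (0:ℝ) ≤ 2 * σ ^ 2 := by positivity
    positivity
  -- case on whether any label occurred
  set S : Finset ℕ := (Icc 1 T).filter (fun s => ℓ s = true) with hS
  rcases S.eq_empty_or_nonempty with hSe | hSne
  · have : N T = 0 := by rw [hN]; rw [← hS, hSe]; simp
    rw [this]; push_cast; linarith
  · set t := S.max' hSne with ht
    have htmem : t ∈ S := S.max'_mem hSne
    have ht1 : 1 ≤ t := (mem_Icc.mp (mem_filter.mp htmem).1).1
    have htT : t ≤ T := (mem_Icc.mp (mem_filter.mp htmem).1).2
    have hℓt : ℓ t = true := by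
      have := (mem_filter.mp htmem).2; simpa using this
    -- N T = N (t-1) + 1
    have hsplit : S = insert t ((Icc 1 (t-1)).filter (fun s => ℓ s = true)) := by
      rw [hS]
      ext s
      simp only [mem_insert, mem_filter, mem_Icc]
      constructor
      · intro hs
        have hsS : s ∈ S := by rw [hS]; simp only [mem_filter, mem_Icc]; exact hs
        clear hsS
        have hsS : s ∈ S := by rw [hS]; simp only [mem_filter, mem_Icc]; exact hs
        have hst : s ≤ t := S.le_max' s hsS
        rcases eq_or_lt_of_le hst with h | h
        · left; exact h
        · right; exact ⟨⟨hs.1.1, Nat.le_sub_one_of_lt h⟩, hs.2⟩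
      · rintro (rfl | ⟨⟨h1, h2⟩, h3⟩)
        · exact ⟨⟨ht1, htT⟩, hℓt⟩
        · exact ⟨⟨h1, le_trans (le_trans h2 (Nat.sub_le t 1)) htT⟩, h3⟩
    have htnot : t ∉ (Icc 1 (t-1)).filter (fun s => ℓ s = true) := by
      simp only [mem_filter, mem_Icc]
      rintro ⟨⟨_, h2⟩, _⟩
      omega
    have hNT : N T = N (t-1) + 1 := by
      rw [hN T, hN (t-1), ← hS, hsplit, card_insert_of_notMem htnot]
    rcases hthresh t ht1 htT hℓt with h0 | hlt
    · rw [hNT, h0]; push_cast; linarith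
    · rcases Nat.eq_zero_or_pos (N (t-1)) with h0 | hpos
      · rw [hNT, h0]; push_cast; linarith
      · have hMt : (1:ℝ) ≤ (M t : ℝ) := by exact_mod_cast hMpos t ht1 htT
        have hMtpos : (0:ℝ) < (M t : ℝ) := by linarith
        have hb : (0:ℝ) ≤ B ^ ((1 : ℝ) / 3) * (M t : ℝ) ^ (-(1 : ℝ) / 3) := by
          have := Real.rpow_nonneg hB.le ((1:ℝ)/3)
          have := Real.rpow_nonneg hMtpos.le (-(1:ℝ)/3)
          positivity
        have hsq := (Real.lt_sqrt hb).mp hlt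
        have hNpos : (0:ℝ) < (N (t-1) : ℝ) := by exact_mod_cast hpos
        have hnsq : (B ^ ((1 : ℝ) / 3) * (M t : ℝ) ^ (-(1 : ℝ) / 3))^2
            = B ^ ((2 : ℝ) / 3) * (M t : ℝ) ^ (-(2 : ℝ) / 3) := by
          rw [mul_pow, ← Real.rpow_natCast (B ^ ((1:ℝ)/3)) 2,
            ← Real.rpow_natCast ((M t : ℝ) ^ (-(1:ℝ)/3)) 2,
            ← Real.rpow_mul hB.le, ← Real.rpow_mul hMtpos.le]
          norm_num
        rw [hnsq] at hsq
        -- log bounds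
        have hn1 := (hn t ht1 htT hℓt).1
        have hn2 := (hn t ht1 htT hℓt).2
        have hntR : (1:ℝ) ≤ (n t : ℝ) := by exact_mod_cast hn1
        have hntT : (n t : ℝ) ≤ (T:ℝ) := by exact_mod_cast hn2
        have hlogle : Real.log (2 * (n t : ℝ) ^ 3 / δ) ≤ Real.log (2 * (T : ℝ) ^ 3 / δ) := by
          apply Real.log_le_log (by positivity)
          gcongr
        have hMTt : (M t : ℝ) ^ ((2:ℝ)/3) ≤ (M T : ℝ) ^ ((2:ℝ)/3) := by
          apply Real.rpow_le_rpow hMtpos.le _ (by norm_num)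
          exact_mod_cast hMmono t T ht1 htT le_rfl
        have hb2' : (0:ℝ) < B ^ (-(2:ℝ)/3) := Real.rpow_pos_of_pos hB _
        have hm2 : (0:ℝ) < (M t:ℝ) ^ ((2:ℝ)/3) := Real.rpow_pos_of_pos hMtpos _
        have haa : B ^ (-(2:ℝ)/3) * B ^ ((2:ℝ)/3) = 1 := by
          rw [← Real.rpow_add hB]; norm_num
        have hmm : (M t:ℝ) ^ (-(2:ℝ)/3) * (M t:ℝ) ^ ((2:ℝ)/3) = 1 := by
          rw [← Real.rpow_add hMtpos]; norm_num
        have h1 : B ^ ((2:ℝ)/3) * (M t:ℝ) ^ (-(2:ℝ)/3) * (N (t-1):ℝ) <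
            2 * σ ^ 2 * Real.log (2 * (n t : ℝ) ^ 3 / δ) := (lt_div_iff₀ hNpos).mp hsq
        have hxle : 2 * σ ^ 2 * Real.log (2 * (n t : ℝ) ^ 3 / δ) ≤
            2 * σ ^ 2 * Real.log (2 * (T : ℝ) ^ 3 / δ) :=
          mul_le_mul_of_nonneg_left hlogle (by positivity)
        have key : (N (t-1):ℝ) ≤ 2 * σ ^ 2 * Real.log (2 * (T : ℝ) ^ 3 / δ) *
            B ^ (-(2:ℝ)/3) * (M T:ℝ) ^ ((2:ℝ)/3) := by
          have e : (N (t-1):ℝ) = (B ^ ((2:ℝ)/3) * (M t:ℝ) ^ (-(2:ℝ)/3) * (N (t-1):ℝ)) *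
              (B ^ (-(2:ℝ)/3) * (M t:ℝ) ^ ((2:ℝ)/3)) := by
            have e2 : (B ^ ((2:ℝ)/3) * (M t:ℝ) ^ (-(2:ℝ)/3) * (N (t-1):ℝ)) *
                (B ^ (-(2:ℝ)/3) * (M t:ℝ) ^ ((2:ℝ)/3)) =
                (N (t-1):ℝ) * ((B ^ (-(2:ℝ)/3) * B ^ ((2:ℝ)/3)) *
                  ((M t:ℝ) ^ (-(2:ℝ)/3) * (M t:ℝ) ^ ((2:ℝ)/3))) := by ring
            rw [e2, haa, hmm]; ring
          calc (N (t-1):ℝ)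
              = (B ^ ((2:ℝ)/3) * (M t:ℝ) ^ (-(2:ℝ)/3) * (N (t-1):ℝ)) *
                (B ^ (-(2:ℝ)/3) * (M t:ℝ) ^ ((2:ℝ)/3)) := e
            _ ≤ (2 * σ ^ 2 * Real.log (2 * (n t : ℝ) ^ 3 / δ)) *
                (B ^ (-(2:ℝ)/3) * (M t:ℝ) ^ ((2:ℝ)/3)) :=
                mul_le_mul_of_nonneg_right h1.le (by positivity)
            _ ≤ (2 * σ ^ 2 * Real.log (2 * (T : ℝ) ^ 3 / δ)) *
                (B ^ (-(2:ℝ)/3) * (M t:ℝ) ^ ((2:ℝ)/3)) :=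
                mul_le_mul_of_nonneg_right hxle (by positivity)
            _ = 2 * σ ^ 2 * Real.log (2 * (T : ℝ) ^ 3 / δ) *
                B ^ (-(2:ℝ)/3) * (M t:ℝ) ^ ((2:ℝ)/3) := by ring
            _ ≤ 2 * σ ^ 2 * Real.log (2 * (T : ℝ) ^ 3 / δ) *
                B ^ (-(2:ℝ)/3) * (M T:ℝ) ^ ((2:ℝ)/3) :=
                mul_le_mul_of_nonneg_left hMTt
                  (mul_nonneg (mul_nonneg (by positivity) hlogT.le) hb2'.le)
        rw [hNT]; push_cast; linarith
end

section
/- Let σ > 0 and n ≥ 1 with σ/(2√n) ≤ 1/4. Then for every estimator μ̂ : ℝⁿ → ℝ (a measurable function of n i.i.d. samples), sup over θ ∈ [0,1] of E_{X_1,...,X_n ~ N(θ,σ²) i.i.d.} |μ̂(X_1,...,X_n) − θ| ≥ σ/(8√n). -/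
open MeasureTheory ProbabilityTheory

open scoped ENNReal NNReal

/-!
Le Cam's two-point method. Put `θ₀ = 1/2 - δ`, `θ₁ = 1/2 + δ` with `δ = σ / (2√n)` and let `A`
be the event that the estimator is at least `1/2`. On `A` the estimator is at distance `≥ δ` from
`θ₀`, off `A` from `θ₁`, so the two risks add up to at least `δ (P₀ A + P₁ Aᶜ)`.

With densities `p₀, p₁`, the testing error `P₀ A + P₁ Aᶜ` is at least `I = ∫ min p₀ p₁`. Since
`p₀ p₁ = min p₀ p₁ * max p₀ p₁` and `∫ max p₀ p₁ = 2 - I`, Cauchy–Schwarz gives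
`(∫ √(p₀ p₁))² ≤ I (2 - I)`. The Hellinger affinity `∫ √(p₀ p₁)` tensorizes, and for
`N(θ₀, σ²)` against `N(θ₁, σ²)` it equals `exp (-(θ₁ - θ₀)² / (8σ²))`; over `n` samples
this is `e^(-1/8)`, whose square exceeds `3/4`, forcing `I ≥ 1/2`.
-/

section Pi

variable {E : Type*} [MeasurableSpace E]

theorem lintegral_fin_nat_prod_eq_prod {n : ℕ} {μ : Fin n → Measure E} [∀ i, SigmaFinite (μ i)]
    {f : Fin n → E → ℝ≥0∞} (hf : ∀ i, Measurable (f i)) :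
    ∫⁻ x, ∏ i, f i (x i) ∂(Measure.pi μ) = ∏ i, ∫⁻ x, f i x ∂(μ i) := by
  induction n with
  | zero => simp
  | succ n ih =>
    calc _ = ∫⁻ x : E × (Fin n → E), f 0 x.1 * ∏ i : Fin n, f i.succ (x.2 i)
            ∂((μ 0).prod (Measure.pi fun i ↦ μ i.succ)) := by
          rw [← ((measurePreserving_piFinSuccAbove μ 0).symm).lintegral_comp_emb
            (MeasurableEquiv.measurableEmbedding _)]
          simp_rw [MeasurableEquiv.piFinSuccAbove_symm_apply, Fin.insertNthEquiv,
            Fin.prod_univ_succ, Fin.insertNth_zero, Equiv.coe_fn_mk, Fin.cons_succ,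
            Fin.zero_succAbove, cast_eq, Fin.cons_zero]
      _ = (∫⁻ x, f 0 x ∂μ 0) * ∏ i : Fin n, ∫⁻ x, f i.succ x ∂μ i.succ := by
          rw [← ih fun i ↦ hf i.succ]
          exact lintegral_prod_mul (hf 0).aemeasurable
            (Finset.measurable_prod _ fun (i : Fin n) _ ↦
              (hf i.succ).comp (measurable_pi_apply i)).aemeasurable
      _ = ∏ i, ∫⁻ x, f i x ∂μ i := (Fin.prod_univ_succ fun i ↦ ∫⁻ x, f i x ∂μ i).symm

theorem pi_withDensity {n : ℕ} {μ : Fin n → Measure E} [∀ i, SigmaFinite (μ i)]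
    {f : Fin n → E → ℝ≥0∞} (hf : ∀ i, Measurable (f i))
    [∀ i, SigmaFinite ((μ i).withDensity (f i))] :
    Measure.pi (fun i ↦ (μ i).withDensity (f i))
      = (Measure.pi μ).withDensity fun x ↦ ∏ i, f i (x i) := by
  refine Measure.pi_eq fun s hs ↦ ?_
  rw [withDensity_apply _ (MeasurableSet.univ_pi hs), Measure.restrict_pi_pi,
    lintegral_fin_nat_prod_eq_prod hf]
  simp_rw [withDensity_apply _ (hs _)]

end Pi

section Affinity

variable {α : Type*} [MeasurableSpace α] {ν : Measure α} {p q : α → ℝ≥0∞}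

noncomputable def hellingerAffinity (ν : Measure α) (p q : α → ℝ≥0∞) : ℝ≥0∞ :=
  ∫⁻ x, (p x * q x) ^ (1 / 2 : ℝ) ∂ν

theorem lintegral_min_le_withDensity_add_withDensity_compl {s : Set α} (hs : MeasurableSet s) :
    ∫⁻ x, min (p x) (q x) ∂ν ≤ ν.withDensity p s + ν.withDensity q sᶜ := by
  rw [withDensity_apply _ hs, withDensity_apply _ hs.compl, ← lintegral_add_compl _ hs]
  exact add_le_add (lintegral_mono fun _ ↦ min_le_left _ _)
    (lintegral_mono fun _ ↦ min_le_right _ _)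

theorem sq_hellingerAffinity_le_lintegral_min_mul_lintegral_max (hp : Measurable p)
    (hq : Measurable q) :
    hellingerAffinity ν p q ^ 2 ≤ (∫⁻ x, min (p x) (q x) ∂ν) * ∫⁻ x, max (p x) (q x) ∂ν := by
  have hsplit : (fun x ↦ (p x * q x) ^ (1 / 2 : ℝ))
      = (fun x ↦ min (p x) (q x) ^ (1 / 2 : ℝ)) * fun x ↦ max (p x) (q x) ^ (1 / 2 : ℝ) := by
    ext x
    rw [Pi.mul_apply, ← ENNReal.mul_rpow_of_nonneg _ _ (by norm_num), min_mul_max]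
  have hsqrt_sq (a : ℝ≥0∞) : (a ^ (1 / 2 : ℝ)) ^ (2 : ℝ) = a := by
    rw [← ENNReal.rpow_mul]
    norm_num
  have hCS := ENNReal.lintegral_mul_le_Lp_mul_Lq ν Real.HolderConjugate.two_two
    ((hp.min hq).pow_const (1 / 2 : ℝ)).aemeasurable
    ((hp.max hq).pow_const (1 / 2 : ℝ)).aemeasurable
  rw [← hsplit] at hCS
  simp only [hsqrt_sq] at hCS
  calc hellingerAffinity ν p q ^ 2
      ≤ ((∫⁻ x, min (p x) (q x) ∂ν) ^ (1 / 2 : ℝ)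
          * (∫⁻ x, max (p x) (q x) ∂ν) ^ (1 / 2 : ℝ)) ^ 2 := by
        gcongr
        exact hCS
    _ = _ := by
        rw [mul_pow, ← ENNReal.rpow_natCast, ← ENNReal.rpow_natCast, ← ENNReal.rpow_mul,
          ← ENNReal.rpow_mul]
        norm_num

theorem ofReal_le_lintegral_min_of_le_sq_hellingerAffinity (hp : Measurable p)
    (hq : Measurable q) (hp1 : ∫⁻ x, p x ∂ν = 1) (hq1 : ∫⁻ x, q x ∂ν = 1) {c : ℝ} (hc : c ≤ 1)
    (hpq : ENNReal.ofReal (c * (2 - c)) ≤ hellingerAffinity ν p q ^ 2) :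
    ENNReal.ofReal c ≤ ∫⁻ x, min (p x) (q x) ∂ν := by
  set I := ∫⁻ x, min (p x) (q x) ∂ν
  set J := ∫⁻ x, max (p x) (q x) ∂ν
  have hIJ : I + J = 2 := by
    rw [← lintegral_add_left (hp.min hq)]
    simp_rw [min_add_max]
    rw [lintegral_add_left hp, hp1, hq1, one_add_one_eq_two]
  have hI : I ≠ ∞ := ne_top_of_le_ne_top (by simp) (le_self_add.trans hIJ.le)
  have hJ : J ≠ ∞ := ne_top_of_le_ne_top (by simp) (le_add_self.trans hIJ.le)
  have hIJ_real : I.toReal + J.toReal = 2 := by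
    rw [← ENNReal.toReal_add hI hJ, hIJ, ENNReal.toReal_ofNat]
  have hIJ_mul : c * (2 - c) ≤ I.toReal * J.toReal := by
    rw [← ENNReal.toReal_mul, ← ENNReal.ofReal_le_iff_le_toReal (ENNReal.mul_ne_top hI hJ)]
    exact hpq.trans (sq_hellingerAffinity_le_lintegral_min_mul_lintegral_max hp hq)
  have hI_le : I.toReal ≤ 1 := by
    rw [← ENNReal.toReal_one, ← hp1]
    exact ENNReal.toReal_mono (by simp [hp1]) (lintegral_mono fun _ ↦ min_le_left _ _)
  rw [ENNReal.ofReal_le_iff_le_toReal hI]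
  nlinarith

theorem hellingerAffinity_pi {E : Type*} [MeasurableSpace E] {n : ℕ} {μ : Fin n → Measure E}
    [∀ i, SigmaFinite (μ i)] {p q : Fin n → E → ℝ≥0∞} (hp : ∀ i, Measurable (p i))
    (hq : ∀ i, Measurable (q i)) :
    hellingerAffinity (Measure.pi μ) (fun x ↦ ∏ i, p i (x i)) (fun x ↦ ∏ i, q i (x i))
      = ∏ i, hellingerAffinity (μ i) (p i) (q i) := by
  simp_rw [hellingerAffinity, ← Finset.prod_mul_distrib,
    ← ENNReal.prod_rpow_of_nonneg (by norm_num : (0 : ℝ) ≤ 1 / 2)]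
  exact lintegral_fin_nat_prod_eq_prod fun i ↦ ((hp i).mul (hq i)).pow_const _

end Affinity

section Gaussian

variable {v : ℝ≥0}

theorem sqrt_gaussianPDFReal_mul (a b : ℝ) (hv : v ≠ 0) (x : ℝ) :
    √(gaussianPDFReal a v x * gaussianPDFReal b v x)
      = Real.exp (-((a - b) ^ 2 / (8 * v))) * gaussianPDFReal ((a + b) / 2) v x := by
  have hv' : (0 : ℝ) < v := by positivity
  have hexp : Real.exp (-(x - a) ^ 2 / (2 * v)) * Real.exp (-(x - b) ^ 2 / (2 * v))
      = (Real.exp (-((a - b) ^ 2 / (8 * v)))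
          * Real.exp (-(x - (a + b) / 2) ^ 2 / (2 * v))) ^ 2 := by
    rw [← Real.exp_add, mul_pow, ← Real.exp_nat_mul, ← Real.exp_nat_mul, ← Real.exp_add]
    congr 1
    field_simp
    ring
  simp only [gaussianPDFReal]
  rw [mul_mul_mul_comm, hexp, ← mul_inv, Real.mul_self_sqrt (by positivity),
    Real.sqrt_mul (by positivity), Real.sqrt_inv, Real.sqrt_sq (by positivity)]
  ring

theorem hellingerAffinity_gaussianPDF (a b : ℝ) (hv : v ≠ 0) :
    hellingerAffinity volume (gaussianPDF a v) (gaussianPDF b v)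
      = ENNReal.ofReal (Real.exp (-((a - b) ^ 2 / (8 * v)))) := by
  have hpointwise (x : ℝ) : (gaussianPDF a v x * gaussianPDF b v x) ^ (1 / 2 : ℝ)
      = ENNReal.ofReal (Real.exp (-((a - b) ^ 2 / (8 * v))))
        * gaussianPDF ((a + b) / 2) v x := by
    rw [gaussianPDF, gaussianPDF, gaussianPDF,
      ← ENNReal.ofReal_mul (gaussianPDFReal_nonneg _ _ _),
      ENNReal.ofReal_rpow_of_nonneg
        (mul_nonneg (gaussianPDFReal_nonneg _ _ _) (gaussianPDFReal_nonneg _ _ _)) (by norm_num),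
      ← Real.sqrt_eq_rpow, sqrt_gaussianPDFReal_mul a b hv, ENNReal.ofReal_mul (Real.exp_pos _).le]
  simp_rw [hellingerAffinity, hpointwise]
  rw [lintegral_const_mul _ (measurable_gaussianPDF _ _), lintegral_gaussianPDF_eq_one _ hv,
    mul_one]

theorem pi_gaussianReal_eq_withDensity (n : ℕ) (a : ℝ) (hv : v ≠ 0) :
    Measure.pi (fun _ : Fin n ↦ gaussianReal a v)
      = (Measure.pi fun _ ↦ volume).withDensity fun x ↦ ∏ i, gaussianPDF a v (x i) := by
  have h := gaussianReal_of_var_ne_zero a hv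
  have : SigmaFinite (volume.withDensity (gaussianPDF a v)) := h ▸ inferInstance
  rw [h]
  exact pi_withDensity fun _ ↦ measurable_gaussianPDF a v

theorem ofReal_half_le_pi_gaussianReal_add_compl {n : ℕ} {a b : ℝ} (hv : v ≠ 0)
    (hab : n * (a - b) ^ 2 ≤ v) {s : Set (Fin n → ℝ)} (hs : MeasurableSet s) :
    ENNReal.ofReal (1 / 2)
      ≤ Measure.pi (fun _ ↦ gaussianReal a v) s + Measure.pi (fun _ ↦ gaussianReal b v) sᶜ := by
  have hdensity (c : ℝ) : Measurable fun x : Fin n → ℝ ↦ ∏ i, gaussianPDF c v (x i) :=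
    Finset.measurable_prod _ fun i _ ↦ (measurable_gaussianPDF c v).comp (measurable_pi_apply i)
  have hmass (c : ℝ) :
      ∫⁻ x : Fin n → ℝ, ∏ i, gaussianPDF c v (x i) ∂(Measure.pi fun _ ↦ volume) = 1 := by
    rw [← setLIntegral_univ, ← withDensity_apply _ MeasurableSet.univ,
      ← pi_gaussianReal_eq_withDensity n c hv, measure_univ]
  have haffinity : ENNReal.ofReal (1 / 2 * (2 - 1 / 2)) ≤ hellingerAffinity
      (Measure.pi fun _ ↦ volume) (fun x : Fin n → ℝ ↦ ∏ i, gaussianPDF a v (x i))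
      (fun x ↦ ∏ i, gaussianPDF b v (x i)) ^ 2 := by
    have hv' : (0 : ℝ) < v := by positivity
    have hexponent : n * ((a - b) ^ 2 / (8 * v)) ≤ 1 / 8 := by
      rw [← mul_div_assoc, div_le_iff₀ (by positivity)]
      linarith
    rw [hellingerAffinity_pi (fun _ ↦ measurable_gaussianPDF a v)
        (fun _ ↦ measurable_gaussianPDF b v), Finset.prod_congr rfl fun _ _ ↦
        hellingerAffinity_gaussianPDF a b hv, Finset.prod_const, Finset.card_univ,
      Fintype.card_fin, ← pow_mul, ← ENNReal.ofReal_pow (Real.exp_pos _).le, ← Real.exp_nat_mul]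
    refine ENNReal.ofReal_le_ofReal ?_
    calc 1 / 2 * (2 - 1 / 2) ≤ -(1 / 4) + 1 := by norm_num
      _ ≤ Real.exp (-(1 / 4)) := Real.add_one_le_exp _
      _ ≤ _ := by
        gcongr
        push_cast
        linarith
  rw [pi_gaussianReal_eq_withDensity n a hv, pi_gaussianReal_eq_withDensity n b hv]
  exact (ofReal_le_lintegral_min_of_le_sq_hellingerAffinity (hdensity a) (hdensity b) (hmass a)
    (hmass b) (by norm_num) haffinity).trans
    (lintegral_min_le_withDensity_add_withDensity_compl hs)

end Gaussian

section TwoPoint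

variable {α : Type*} [MeasurableSpace α] {est : α → ℝ}

noncomputable def risk (μ : Measure α) (est : α → ℝ) (θ : ℝ) : ℝ≥0∞ :=
  ∫⁻ x, ENNReal.ofReal |est x - θ| ∂μ

theorem ofReal_mul_measure_le_risk (μ : Measure α) (hest : Measurable est) {c θ : ℝ}
    {s : Set α} (hs : ∀ x ∈ s, c ≤ |est x - θ|) :
    ENNReal.ofReal c * μ s ≤ risk μ est θ :=
  calc ENNReal.ofReal c * μ s
      ≤ ENNReal.ofReal c * μ {x | ENNReal.ofReal c ≤ ENNReal.ofReal |est x - θ|} := by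
        gcongr
        exact fun x hx ↦ ENNReal.ofReal_le_ofReal (hs x hx)
    _ ≤ risk μ est θ :=
        mul_meas_ge_le_lintegral₀ (hest.sub_const θ).abs.ennreal_ofReal.aemeasurable _

theorem two_point_risk_lower_bound (μ₀ μ₁ : Measure α) (hest : Measurable est) (θ₀ θ₁ : ℝ) :
    ENNReal.ofReal ((θ₁ - θ₀) / 2)
        * (μ₀ {x | (θ₀ + θ₁) / 2 ≤ est x} + μ₁ {x | (θ₀ + θ₁) / 2 ≤ est x}ᶜ)
      ≤ risk μ₀ est θ₀ + risk μ₁ est θ₁ := by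
  rw [mul_add]
  refine add_le_add (ofReal_mul_measure_le_risk μ₀ hest fun x hx ↦ ?_)
    (ofReal_mul_measure_le_risk μ₁ hest fun x hx ↦ ?_)
  · simp only [Set.mem_ofPred_eq] at hx
    exact le_abs.2 (Or.inl (by linarith))
  · simp only [Set.mem_compl_iff, Set.mem_ofPred_eq, not_le] at hx
    exact le_abs.2 (Or.inr (by linarith))

end TwoPoint

/-- Minimax lower bound for Gaussian mean estimation in absolute-error loss:
if `σ > 0`, `n ≥ 1` and `σ/(2√n) ≤ 1/4`, then for every measurable estimator
`μ̂ : ℝⁿ → ℝ`, the supremum over `θ ∈ [0,1]` of the risk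
`E_{X ~ N(θ,σ²)^⊗n} |μ̂(X) − θ|` is at least `σ/(8√n)`. -/
theorem gaussian_mean_estimation_minimax_lower (σ : ℝ) (hσ : 0 < σ) (n : ℕ) (hn : 1 ≤ n)
    (hsmall : σ / (2 * Real.sqrt n) ≤ 1 / 4)
    (est : (Fin n → ℝ) → ℝ) (hest : Measurable est) :
    ENNReal.ofReal (σ / (8 * Real.sqrt n)) ≤
      ⨆ θ : Set.Icc (0 : ℝ) 1,
        ∫⁻ v, ENNReal.ofReal |est v - (θ : ℝ)|
          ∂(Measure.pi fun _ : Fin n => gaussianReal (θ : ℝ) (Real.toNNReal (σ ^ 2))) := by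
  set δ := σ / (2 * √n)
  have hδ : 0 ≤ δ := div_nonneg hσ.le (by positivity)
  have hgap : 1 / 2 + δ - (1 / 2 - δ) = σ / √n := by ring
  set v := Real.toNNReal (σ ^ 2)
  have hv : v ≠ 0 := by simpa [v] using hσ.ne'
  have hsep : n * ((1 / 2 - δ) - (1 / 2 + δ)) ^ 2 ≤ (v : ℝ) := by
    have hn' : (0 : ℝ) < n := by exact_mod_cast hn
    rw [← neg_sub, neg_sq, hgap, div_pow, Real.sq_sqrt hn'.le, mul_div_cancel₀ _ hn'.ne',
      Real.coe_toNNReal _ (sq_nonneg σ)]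
  set R := fun θ : ℝ ↦ risk (Measure.pi fun _ : Fin n ↦ gaussianReal θ v) est θ
  have hR (θ : ℝ) (hθ : θ ∈ Set.Icc (0 : ℝ) 1) : R θ ≤ ⨆ θ : Set.Icc (0 : ℝ) 1, R θ :=
    le_iSup (fun θ : Set.Icc (0 : ℝ) 1 ↦ R θ) ⟨θ, hθ⟩
  have htest := ofReal_half_le_pi_gaussianReal_add_compl hv hsep
    (measurableSet_le (measurable_const (a := (1 / 2 - δ + (1 / 2 + δ)) / 2)) hest)
  refine (ENNReal.mul_le_mul_iff_right two_ne_zero ENNReal.ofNat_ne_top).1 ?_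
  calc 2 * ENNReal.ofReal (σ / (8 * √n))
      = ENNReal.ofReal ((1 / 2 + δ - (1 / 2 - δ)) / 2) * ENNReal.ofReal (1 / 2) := by
        rw [hgap, ← ENNReal.ofReal_mul (by positivity), ← ENNReal.ofReal_ofNat 2,
          ← ENNReal.ofReal_mul zero_le_two]
        ring_nf
    _ ≤ _ := by gcongr
    _ ≤ R (1 / 2 - δ) + R (1 / 2 + δ) := two_point_risk_lower_bound _ _ hest _ _
    _ ≤ 2 * ⨆ θ : Set.Icc (0 : ℝ) 1, R θ := by
        rw [two_mul]
        exact add_le_add (hR _ ⟨by linarith, by linarith⟩) (hR _ ⟨by linarith, by linarith⟩)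
end
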